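/- Let Ψ : U → V, (ξ,η) ↦ (x(ξ,η), y(ξ,η)) be a twice continuously differentiable bijection between open subsets of ℝ² whose Jacobian J = x_ξ y_η − x_η y_ξ is nowhere zero, and let f, g : V → ℝ be differentiable. Then at every point, (∂f/∂x + ∂g/∂y) ∘ Ψ = (1/J) [ ∂_ξ( y_η (f∘Ψ) − x_η (g∘Ψ) ) + ∂_η( −y_ξ (f∘Ψ) + x_ξ (g∘Ψ) ) ]; i.e., the physical divergence of the flux pair (f,g) transforms into a divergence in the curvilinear coordinates with the metric-weighted fluxes. -/

import Mathlib

/-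
Write `Ψ = (x, y)` and `F = f ∘ Ψ`, `G = g ∘ Ψ`. Expanding the two derivatives of the fluxes by the
product rule gives the terms `(y_ηξ - y_ξη) F + (x_ξη - x_ηξ) G`, which vanish by the symmetry of
second derivatives of the C² functions `x` and `y`, plus
`y_η F_ξ - y_ξ F_η + x_ξ G_η - x_η G_ξ`. By the chain rule `F_ξ = x_ξ f_x + y_ξ f_y` and
`F_η = x_η f_x + y_η f_y` (and likewise for `G`), so this remainder collapses to `J (f_x + g_y)`.
-/

/-- Partial derivative of `f : ℝ² → ℝ` with respect to the first coordinate. -/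
noncomputable def pd1 (f : ℝ × ℝ → ℝ) (z : ℝ × ℝ) : ℝ := fderiv ℝ f z (1, 0)

/-- Partial derivative of `f : ℝ² → ℝ` with respect to the second coordinate. -/
noncomputable def pd2 (f : ℝ × ℝ → ℝ) (z : ℝ × ℝ) : ℝ := fderiv ℝ f z (0, 1)

open Topology

variable {a b u f g x y : ℝ × ℝ → ℝ} {z : ℝ × ℝ}

lemma fderiv_apply_eq_pd (f : ℝ × ℝ → ℝ) (z v : ℝ × ℝ) :
    fderiv ℝ f z v = v.1 * pd1 f z + v.2 * pd2 f z := by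
  have hv : v = v.1 • ((1 : ℝ), (0 : ℝ)) + v.2 • ((0 : ℝ), (1 : ℝ)) := by simp
  rw [hv, map_add, map_smul, map_smul]
  simp [pd1, pd2]

lemma fderiv_comp_prodMk_apply (hx : DifferentiableAt ℝ x z) (hy : DifferentiableAt ℝ y z)
    (hf : DifferentiableAt ℝ f (x z, y z)) (v : ℝ × ℝ) :
    fderiv ℝ (fun w => f (x w, y w)) z v
      = fderiv ℝ x z v * pd1 f (x z, y z) + fderiv ℝ y z v * pd2 f (x z, y z) := by
  rw [fderiv_fun_comp z hf (hx.prodMk hy), ContinuousLinearMap.comp_apply,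
    DifferentiableAt.fderiv_prodMk hx hy, ContinuousLinearMap.prod_apply, fderiv_apply_eq_pd]

lemma pd1_comp_prodMk (hx : DifferentiableAt ℝ x z) (hy : DifferentiableAt ℝ y z)
    (hf : DifferentiableAt ℝ f (x z, y z)) :
    pd1 (fun w => f (x w, y w)) z = pd1 x z * pd1 f (x z, y z) + pd1 y z * pd2 f (x z, y z) :=
  fderiv_comp_prodMk_apply hx hy hf _

lemma pd2_comp_prodMk (hx : DifferentiableAt ℝ x z) (hy : DifferentiableAt ℝ y z)
    (hf : DifferentiableAt ℝ f (x z, y z)) :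
    pd2 (fun w => f (x w, y w)) z = pd2 x z * pd1 f (x z, y z) + pd2 y z * pd2 f (x z, y z) :=
  fderiv_comp_prodMk_apply hx hy hf _

lemma fderiv_mul_apply (ha : DifferentiableAt ℝ a z) (hb : DifferentiableAt ℝ b z)
    (v : ℝ × ℝ) :
    fderiv ℝ (fun w => a w * b w) z v = a z * fderiv ℝ b z v + b z * fderiv ℝ a z v := by
  rw [fderiv_fun_mul ha hb]
  rfl

lemma ContDiffAt.differentiableAt_fderiv_apply (hu : ContDiffAt ℝ 2 u z) (v : ℝ × ℝ) :
    DifferentiableAt ℝ (fun w => fderiv ℝ u w v) z :=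
  ((hu.fderiv_right (m := 1) le_rfl).differentiableAt one_ne_zero).clm_apply
    (differentiableAt_const v)

lemma ContDiffAt.pd1_pd2_comm (hu : ContDiffAt ℝ 2 u z) :
    pd1 (pd2 u) z = pd2 (pd1 u) z := by
  have hu' : DifferentiableAt ℝ (fderiv ℝ u) z :=
    (hu.fderiv_right (m := 1) le_rfl).differentiableAt one_ne_zero
  change fderiv ℝ (fun w => fderiv ℝ u w (0, 1)) z (1, 0)
    = fderiv ℝ (fun w => fderiv ℝ u w (1, 0)) z (0, 1)
  rw [fderiv_clm_apply hu' (differentiableAt_const _),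
    fderiv_clm_apply hu' (differentiableAt_const _)]
  simpa using hu.isSymmSndFDerivAt (by simp) _ _

lemma jacobian_mul_divergence_comp_eq (hx : ContDiffAt ℝ 2 x z)
    (hy : ContDiffAt ℝ 2 y z) (hf : DifferentiableAt ℝ f (x z, y z))
    (hg : DifferentiableAt ℝ g (x z, y z)) :
    (pd1 x z * pd2 y z - pd2 x z * pd1 y z) * (pd1 f (x z, y z) + pd2 g (x z, y z))
      = pd1 (fun w => pd2 y w * f (x w, y w) - pd2 x w * g (x w, y w)) z
        + pd2 (fun w => -(pd1 y w) * f (x w, y w) + pd1 x w * g (x w, y w)) z := by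
  have hx1 := hx.differentiableAt two_ne_zero
  have hy1 := hy.differentiableAt two_ne_zero
  have hxξ : DifferentiableAt ℝ (pd1 x) z := hx.differentiableAt_fderiv_apply _
  have hxη : DifferentiableAt ℝ (pd2 x) z := hx.differentiableAt_fderiv_apply _
  have hyξ : DifferentiableAt ℝ (pd1 y) z := hy.differentiableAt_fderiv_apply _
  have hyη : DifferentiableAt ℝ (pd2 y) z := hy.differentiableAt_fderiv_apply _
  have hF : DifferentiableAt ℝ (fun w => f (x w, y w)) z := hf.comp z (hx1.prodMk hy1)
  have hG : DifferentiableAt ℝ (fun w => g (x w, y w)) z := hg.comp z (hx1.prodMk hy1)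
  have flux_ξ : pd1 (fun w => pd2 y w * f (x w, y w) - pd2 x w * g (x w, y w)) z
      = pd2 y z * pd1 (fun w => f (x w, y w)) z + f (x z, y z) * pd1 (pd2 y) z
        - (pd2 x z * pd1 (fun w => g (x w, y w)) z + g (x z, y z) * pd1 (pd2 x) z) := by
    simp only [pd1]
    rw [fderiv_fun_sub (hyη.fun_mul hF) (hxη.fun_mul hG), sub_apply,
      fderiv_mul_apply hyη hF, fderiv_mul_apply hxη hG]
  have flux_η : pd2 (fun w => -(pd1 y w) * f (x w, y w) + pd1 x w * g (x w, y w)) z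
      = -pd1 y z * pd2 (fun w => f (x w, y w)) z + f (x z, y z) * -pd2 (pd1 y) z
        + (pd1 x z * pd2 (fun w => g (x w, y w)) z + g (x z, y z) * pd2 (pd1 x) z) := by
    simp only [pd2]
    rw [fderiv_fun_add (hyξ.fun_neg.fun_mul hF) (hxξ.fun_mul hG), add_apply,
      fderiv_mul_apply hyξ.fun_neg hF, fderiv_mul_apply hxξ hG, fderiv_fun_neg, neg_apply]
  rw [flux_ξ, flux_η, hx.pd1_pd2_comm, hy.pd1_pd2_comm, pd1_comp_prodMk hx1 hy1 hf,
    pd2_comp_prodMk hx1 hy1 hf, pd1_comp_prodMk hx1 hy1 hg, pd2_comp_prodMk hx1 hy1 hg]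
  ring

/-- **Transformation of the divergence to curvilinear coordinates.**
Let `Ψ : U → V`, `(ξ,η) ↦ (x,y)`, be a C² bijection between open subsets of ℝ² with
nowhere vanishing Jacobian `J = x_ξ y_η - x_η y_ξ`, and let `f, g : V → ℝ` be
differentiable. Then at every point of `U`,
`(f_x + g_y) ∘ Ψ = (1/J) [∂_ξ(y_η (f∘Ψ) - x_η (g∘Ψ)) + ∂_η(-y_ξ (f∘Ψ) + x_ξ (g∘Ψ))]`. -/
theorem divergence_transformation
    (U V : Set (ℝ × ℝ)) (hU : IsOpen U) (hV : IsOpen V)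
    (x y : ℝ × ℝ → ℝ)
    (Ψ : ℝ × ℝ → ℝ × ℝ) (hΨ : ∀ z, Ψ z = (x z, y z))
    (hΨC2 : ContDiffOn ℝ 2 Ψ U)
    (hbij : Set.BijOn Ψ U V)
    (J : ℝ × ℝ → ℝ)
    (hJ : ∀ z, J z = pd1 x z * pd2 y z - pd2 x z * pd1 y z)
    (hJ0 : ∀ z ∈ U, J z ≠ 0)
    (f g : ℝ × ℝ → ℝ)
    (hf : DifferentiableOn ℝ f V) (hg : DifferentiableOn ℝ g V) :
    ∀ z ∈ U,
      pd1 f (Ψ z) + pd2 g (Ψ z)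
        = (1 / J z) *
            (pd1 (fun w => pd2 y w * f (Ψ w) - pd2 x w * g (Ψ w)) z
              + pd2 (fun w => -(pd1 y w) * f (Ψ w) + pd1 x w * g (Ψ w)) z) := by
  obtain rfl : Ψ = fun w => (x w, y w) := funext hΨ
  intro z hz
  have hU_nhds : U ∈ 𝓝 z := hU.mem_nhds hz
  have hx : ContDiffAt ℝ 2 x z := (contDiff_fst.comp_contDiffOn hΨC2).contDiffAt hU_nhds
  have hy : ContDiffAt ℝ 2 y z := (contDiff_snd.comp_contDiffOn hΨC2).contDiffAt hU_nhds
  have hV_nhds : V ∈ 𝓝 (x z, y z) := hV.mem_nhds (hbij.mapsTo hz)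
  rw [← jacobian_mul_divergence_comp_eq hx hy (hf.differentiableAt hV_nhds)
    (hg.differentiableAt hV_nhds), ← hJ, one_div, inv_mul_cancel_left₀ (hJ0 z hz)]
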